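/- Let d ≥ 1, R ≥ 1, and let ψ, φ : [1,∞) → (0,∞) be decreasing functions with φ(T) ≤ ψ(T) for all T ≥ 1 and ψ(T) → 0 as T → ∞. Let B ⊂ A be affine subspaces of ℝ^d with 0 ≤ b = dim B < a = dim A ≤ d, and assume B is ψ-badly approximable. For a real T ≥ 1 define Π_T = {z ∈ ℝ^{d+1} : 0 ≤ z_0 ≤ T, max_{1≤j≤d}|z_j| ≤ RT, dist_∞(z,𝔄) ≤ φ(RT)}. Then there exists a constant C > 0, depending only on d, A, B and R, such that for every T ≥ 1 the number of integer points in Π_T satisfies #(Π_T ∩ ℤ^{d+1}) ≤ C·(T/ψ(RT))^{a−b}. -/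

import Mathlib

/-- The lift `w ↦ (1, w)` from `ℝ^d` to `ℝ^{d+1}`. -/
noncomputable def lift1 {d : ℕ} (w : Fin d → ℝ) : Fin (d+1) → ℝ := Fin.cons 1 w

/-- The linear span of `{(1,w) : w ∈ B}` for an affine subspace `B ⊆ ℝ^d`. -/
noncomputable def spanLift {d : ℕ} (B : AffineSubspace ℝ (Fin d → ℝ)) :
    Submodule ℝ (Fin (d+1) → ℝ) :=
  Submodule.span ℝ (lift1 '' (B : Set (Fin d → ℝ)))

/-- The set `Π_T`. -/
noncomputable def PiSet {d : ℕ} (A : AffineSubspace ℝ (Fin d → ℝ))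
    (φ : ℝ → ℝ) (R T : ℝ) : Set (Fin (d+1) → ℝ) :=
  {z | 0 ≤ z 0 ∧ z 0 ≤ T ∧ (∀ j : Fin d, |z j.succ| ≤ R * T) ∧
    Metric.infDist z (spanLift A : Set (Fin (d+1) → ℝ)) ≤ φ (R * T)}

/-!
Let `𝔅 ≤ 𝔄` be the spans of the lifts of `B ≤ A`, so `dim 𝔄 - dim 𝔅 = a - b`. Modulo `𝔅`, a point
`z` is described by `k = a - b` coordinates `ω z = O(|z|)` and `l` coordinates `ν z` vanishing on
`𝔄`, hence `ν z = O(dist(z, 𝔄))`, with `dist(z, 𝔅) ≤ C max(|ω z|, |ν z|)`. Sort the integer points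
of `Π_T` by the signs of their last `d` coordinates and by the cube of side
`ε = γ ψ(RT) / (C + 1)` containing `(ω z, ν z)`. Two distinct points in the same class differ by a
nonzero integer vector `x` with `|x| ≤ RT` and `dist(x, 𝔅) < γ ψ(RT) ≤ γ ψ(|x|)`, which `ψ`-bad
approximability forbids. So the points are at most as many as the classes: `O(RT/ε)^k` choices for
`ω`, and `O(1)` for `ν` since `|ν z| = O(φ(RT)) = O(ε)`.
-/

open Module Submodule Finset Metric

section Lift

variable {d : ℕ}

def consZero (d : ℕ) : (Fin d → ℝ) →ₗ[ℝ] (Fin (d+1) → ℝ) := LinearMap.vecCons 0 LinearMap.id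

lemma lift1_eq_lift1_add_consZero (w p : Fin d → ℝ) :
    lift1 w = lift1 p + consZero d (w - p) := by
  ext i
  refine Fin.cases ?_ (fun j => ?_) i <;> simp [lift1, consZero]

lemma consZero_injective : Function.Injective (consZero d) :=
  fun _ _ h => funext fun j => by simpa [consZero] using congrFun h j.succ

lemma lift1_notMem_map_consZero (p : Fin d → ℝ) (D : Submodule ℝ (Fin d → ℝ)) :
    lift1 p ∉ D.map (consZero d) := by
  rintro ⟨v, -, hv⟩
  simpa [lift1, consZero] using congrFun hv 0

lemma spanLift_eq_map_consZero_sup {B : AffineSubspace ℝ (Fin d → ℝ)} {p : Fin d → ℝ}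
    (hp : p ∈ B) : spanLift B = B.direction.map (consZero d) ⊔ span ℝ {lift1 p} := by
  apply le_antisymm
  · rw [spanLift, span_le]
    rintro _ ⟨w, hw, rfl⟩
    rw [lift1_eq_lift1_add_consZero w p]
    exact add_mem (mem_sup_right (mem_span_singleton_self _))
      (mem_sup_left (mem_map_of_mem (AffineSubspace.vsub_mem_direction hw hp)))
  · have hpB : lift1 p ∈ spanLift B := subset_span ⟨p, hp, rfl⟩
    refine sup_le ?_ (span_le.2 (Set.singleton_subset_iff.2 hpB))
    rintro _ ⟨v, hv, rfl⟩
    have hvp : lift1 (v + p) ∈ spanLift B :=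
      subset_span ⟨v + p, AffineSubspace.vadd_mem_of_mem_direction hv hp, rfl⟩
    rw [lift1_eq_lift1_add_consZero (v + p) p, add_sub_cancel_right] at hvp
    simpa using sub_mem hvp hpB

lemma finrank_spanLift {B : AffineSubspace ℝ (Fin d → ℝ)} (hB : (B : Set (Fin d → ℝ)).Nonempty) :
    finrank ℝ (spanLift B) = finrank ℝ B.direction + 1 := by
  obtain ⟨p, hp⟩ := hB
  rw [spanLift_eq_map_consZero_sup hp, finrank_sup_span_singleton (lift1_notMem_map_consZero p _),
    (equivMapOfInjective _ consZero_injective _).finrank_eq.symm]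

lemma spanLift_mono {A B : AffineSubspace ℝ (Fin d → ℝ)} (h : B ≤ A) : spanLift B ≤ spanLift A :=
  span_mono (Set.image_mono h)

end Lift

section LinearAlgebra

variable {E : Type*} [NormedAddCommGroup E] [NormedSpace ℝ E] [FiniteDimensional ℝ E]

lemma finrank_map_mkQ_add_finrank {𝔅 𝔄 : Submodule ℝ E} (h : 𝔅 ≤ 𝔄) :
    finrank ℝ (𝔄.map 𝔅.mkQ) + finrank ℝ 𝔅 = finrank ℝ 𝔄 := by
  have := LinearMap.finrank_range_add_finrank_ker (𝔅.mkQ ∘ₗ 𝔄.subtype)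
  rw [LinearMap.range_comp, Submodule.range_subtype, LinearMap.ker_comp, Submodule.ker_mkQ,
    (Submodule.comapSubtypeEquivOfLe h).finrank_eq] at this
  omega

-- `(ω, ν)` are coordinates on `E ⧸ 𝔅 ≃ (𝔄 ⧸ 𝔅) × W`, and `‖𝔅.mkQ z‖ = infDist z 𝔅`.
lemma exists_infDist_le_mul_norm_prod {𝔅 𝔄 : Submodule ℝ E} (h : 𝔅 ≤ 𝔄) :
    ∃ (k l : ℕ) (ω : E →L[ℝ] (Fin k → ℝ)) (ν : E →L[ℝ] (Fin l → ℝ)) (C : ℝ),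
      k + finrank ℝ 𝔅 = finrank ℝ 𝔄 ∧ 0 ≤ C ∧ (∀ z ∈ 𝔄, ν z = 0) ∧
      ∀ z, infDist z 𝔅 ≤ C * ‖(ω z, ν z)‖ := by
  set U := 𝔄.map 𝔅.mkQ
  obtain ⟨W, hUW⟩ := U.exists_isCompl
  let e : (E ⧸ 𝔅) ≃ₗ[ℝ] (Fin (finrank ℝ U) → ℝ) × (Fin (finrank ℝ W) → ℝ) :=
    (U.prodEquivOfIsCompl W hUW).symm.trans <|
      (LinearEquiv.ofFinrankEq _ _ (by simp)).prodCongr (LinearEquiv.ofFinrankEq _ _ (by simp))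
  let eInv : _ →L[ℝ] E ⧸ 𝔅 := LinearMap.toContinuousLinearMap e.symm.toLinearMap
  refine ⟨finrank ℝ U, finrank ℝ W,
    LinearMap.toContinuousLinearMap (LinearMap.fst _ _ _ ∘ₗ e.toLinearMap ∘ₗ 𝔅.mkQ),
    LinearMap.toContinuousLinearMap (LinearMap.snd _ _ _ ∘ₗ e.toLinearMap ∘ₗ 𝔅.mkQ),
    ‖eInv‖, finrank_map_mkQ_add_finrank h, eInv.opNorm_nonneg, fun z hz => ?_, fun z => ?_⟩
  · show (e (𝔅.mkQ z)).2 = 0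
    simp only [e, LinearEquiv.trans_apply, LinearEquiv.prodCongr_apply,
      (prodEquivOfIsCompl_symm_apply_snd_eq_zero _ _ hUW).2 (mem_map_of_mem hz), map_zero]
  · calc infDist z 𝔅 = ‖eInv (e (𝔅.mkQ z))‖ := by
          simp only [eInv, LinearMap.coe_toContinuousLinearMap', LinearEquiv.coe_coe,
            LinearEquiv.symm_apply_apply]
          exact (QuotientAddGroup.norm_mk (S := 𝔅.toAddSubgroup) z).symm
      _ ≤ ‖eInv‖ * ‖e (𝔅.mkQ z)‖ := eInv.le_opNorm _

end LinearAlgebra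

lemma ContinuousLinearMap.norm_apply_le_mul_infDist {E F : Type*} [SeminormedAddCommGroup E]
    [NormedSpace ℝ E] [SeminormedAddCommGroup F] [NormedSpace ℝ F] (f : E →L[ℝ] F)
    {K : Submodule ℝ E} (hf : ∀ y ∈ K, f y = 0) (z : E) : ‖f z‖ ≤ ‖f‖ * infDist z K := by
  rcases f.opNorm_nonneg.eq_or_lt with h0 | hpos
  · simpa [← h0] using f.le_opNorm z
  rw [← div_le_iff₀' hpos, le_infDist ⟨0, K.zero_mem⟩]
  intro y hy
  rw [div_le_iff₀' hpos, dist_eq_norm]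
  calc ‖f z‖ = ‖f (z - y)‖ := by rw [map_sub, hf y hy, sub_zero]
    _ ≤ ‖f‖ * ‖z - y‖ := f.le_opNorm _

lemma abs_sub_lt_of_floor_div_eq {s t ε : ℝ} (hε : 0 < ε) (h : ⌊s / ε⌋ = ⌊t / ε⌋) :
    |s - t| < ε := by
  have := Int.abs_sub_lt_one_of_floor_eq_floor h
  rwa [← sub_div, abs_div, abs_of_pos hε, div_lt_one hε] at this

lemma card_Icc_floor_neg_floor_le {m : ℝ} (hm : 0 ≤ m) :
    ((Icc ⌊-m⌋ ⌊m⌋).card : ℝ) ≤ 2 * m + 2 := by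
  have hle : ⌊-m⌋ ≤ ⌊m⌋ := Int.floor_mono (by linarith)
  rw [Int.card_Icc, ← Int.cast_natCast, Int.toNat_of_nonneg (by omega)]
  push_cast
  linarith [Int.floor_le m, Int.sub_one_lt_floor (-m)]

lemma finite_and_card_le_of_separated {X K ι : Type*} [Fintype K] [Fintype ι] {S : Set X}
    (g : X → K) (f : X → ι → ℝ) {M : ι → ℝ} {ε : ℝ} (hε : 0 < ε) (hM : ∀ i, 0 ≤ M i)
    (hbdd : ∀ x ∈ S, ∀ i, |f x i| ≤ M i)
    (hsep : ∀ x ∈ S, ∀ y ∈ S, g x = g y → (∀ i, |f x i - f y i| < ε) → x = y) :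
    S.Finite ∧ (Nat.card S : ℝ) ≤ Fintype.card K * ∏ i, (2 * (M i / ε) + 2) := by
  classical
  let F : X → K × (ι → ℤ) := fun x => (g x, fun i => ⌊f x i / ε⌋)
  let t : Finset (K × (ι → ℤ)) := univ ×ˢ Fintype.piFinset fun i => Icc ⌊-(M i / ε)⌋ ⌊M i / ε⌋
  have hmaps : ∀ x ∈ S, F x ∈ t := by
    intro x hx
    simp only [t, F, mem_product, mem_univ, Fintype.mem_piFinset, mem_Icc, true_and]
    intro i
    have := abs_le.1 (hbdd x hx i)
    refine ⟨Int.floor_mono ?_, Int.floor_mono ?_⟩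
    · rw [← neg_div]; gcongr; linarith
    · gcongr; linarith
  have hinj : Set.InjOn F S := fun x hx y hy hxy =>
    hsep x hx y hy (congrArg Prod.fst hxy) fun i =>
      abs_sub_lt_of_floor_div_eq hε (congrFun (congrArg Prod.snd hxy) i)
  refine ⟨(t.finite_toSet.subset (Set.image_subset_iff.2 hmaps)).of_finite_image hinj, ?_⟩
  calc (Nat.card S : ℝ) = S.ncard := by rw [Nat.card_coe_set_eq]
    _ ≤ t.card := by
        exact_mod_cast (Set.ncard_le_ncard_of_injOn F hmaps hinj).trans_eq (Set.ncard_coe_finset t)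
    _ = Fintype.card K * ∏ i, ((Icc ⌊-(M i / ε)⌋ ⌊M i / ε⌋).card : ℝ) := by
        simp [t, card_product, Fintype.card_piFinset]
    _ ≤ _ := by
        gcongr with i
        exact card_Icc_floor_neg_floor_le (div_nonneg (hM i) hε.le)

lemma abs_sub_le_of_nonneg_iff {s t c : ℝ} (h : 0 ≤ s ↔ 0 ≤ t) (hs : |s| ≤ c) (ht : |t| ≤ c) :
    |s - t| ≤ c := by
  rw [abs_le] at hs ht ⊢
  by_cases hs0 : 0 ≤ s
  · have := h.1 hs0
    constructor <;> linarith
  · have := mt h.2 hs0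
    constructor <;> linarith

lemma one_le_norm_intCast {ι : Type*} [Fintype ι] {x : ι → ℤ} (hx : x ≠ 0) :
    1 ≤ ‖(fun i => (x i : ℝ))‖ := by
  obtain ⟨i, hi⟩ := Function.ne_iff.1 hx
  calc (1 : ℝ) ≤ |(x i : ℝ)| := by exact_mod_cast Int.one_le_abs hi
    _ ≤ _ := norm_le_pi_norm (fun i => (x i : ℝ)) i

section PiSet

variable {d : ℕ} {A : AffineSubspace ℝ (Fin d → ℝ)} {s : Set (Fin (d+1) → ℝ)} {ψ φ : ℝ → ℝ}
  {R T γ : ℝ}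

lemma norm_le_of_mem_PiSet (hR : 1 ≤ R) {z : Fin (d+1) → ℝ} (hz : z ∈ PiSet A φ R T) :
    ‖z‖ ≤ R * T := by
  obtain ⟨h0, hT, hsucc, -⟩ := hz
  refine (pi_norm_le_iff_of_nonneg (by nlinarith)).2 fun i => ?_
  refine Fin.cases ?_ (fun j => ?_) i
  · rw [Real.norm_of_nonneg h0]
    nlinarith
  · exact hsucc j

lemma norm_sub_le_of_mem_PiSet (hR : 1 ≤ R) {z w : Fin (d+1) → ℝ} (hz : z ∈ PiSet A φ R T)
    (hw : w ∈ PiSet A φ R T) (hsign : ∀ j : Fin d, 0 ≤ z j.succ ↔ 0 ≤ w j.succ) :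
    ‖z - w‖ ≤ R * T := by
  obtain ⟨hz0, hzT, hz, -⟩ := hz
  obtain ⟨hw0, hwT, hw, -⟩ := hw
  refine (pi_norm_le_iff_of_nonneg (by nlinarith)).2 fun i => ?_
  refine Fin.cases ?_ (fun j => ?_) i
  · exact (abs_sub_le_of_nonneg_of_le hz0 hzT hw0 hwT).trans (by nlinarith)
  · exact abs_sub_le_of_nonneg_iff (hsign j) (hz j) (hw j)

lemma eq_of_mem_PiSet_of_infDist_lt (hR : 1 ≤ R) (hγ : 0 ≤ γ)
    (hψanti : ∀ T₁ T₂, 1 ≤ T₁ → T₁ ≤ T₂ → ψ T₂ ≤ ψ T₁)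
    (hbad : ∀ x : Fin (d+1) → ℤ, x ≠ 0 →
      γ * ψ ‖(fun i => (x i : ℝ))‖ ≤ infDist (fun i => (x i : ℝ)) s)
    {x y : Fin (d+1) → ℤ} (hx : (fun i => (x i : ℝ)) ∈ PiSet A φ R T)
    (hy : (fun i => (y i : ℝ)) ∈ PiSet A φ R T)
    (hsign : ∀ j : Fin d, 0 ≤ (x j.succ : ℝ) ↔ 0 ≤ (y j.succ : ℝ))
    (hclose : infDist ((fun i => (x i : ℝ)) - fun i => (y i : ℝ)) s < γ * ψ (R * T)) :
    x = y := by
  by_contra hne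
  have hcast : (fun i => ((x - y) i : ℝ)) = (fun i => (x i : ℝ)) - fun i => (y i : ℝ) := by
    ext i; simp
  have hnorm := norm_sub_le_of_mem_PiSet hR hx hy hsign
  rw [← hcast] at hnorm hclose
  have hψ := hψanti _ _ (one_le_norm_intCast (sub_ne_zero.2 hne)) hnorm
  linarith [hbad (x - y) (sub_ne_zero.2 hne), mul_le_mul_of_nonneg_left hψ hγ]

lemma finite_and_card_intPoints_PiSet_le {k l : ℕ} {C : ℝ} (hR : 1 ≤ R) (hT : 0 ≤ T) (hγ : 0 < γ)
    (hC : 0 ≤ C) (hψpos : 0 < ψ (R * T)) (hψanti : ∀ T₁ T₂, 1 ≤ T₁ → T₁ ≤ T₂ → ψ T₂ ≤ ψ T₁)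
    (hφψ : φ (R * T) ≤ ψ (R * T))
    (hbad : ∀ x : Fin (d+1) → ℤ, x ≠ 0 →
      γ * ψ ‖(fun i => (x i : ℝ))‖ ≤ infDist (fun i => (x i : ℝ)) s)
    (ω : (Fin (d+1) → ℝ) →L[ℝ] (Fin k → ℝ)) (ν : (Fin (d+1) → ℝ) →L[ℝ] (Fin l → ℝ))
    (hν : ∀ z ∈ spanLift A, ν z = 0) (hdist : ∀ z, infDist z s ≤ C * ‖(ω z, ν z)‖) :
    {x : Fin (d+1) → ℤ | (fun i => (x i : ℝ)) ∈ PiSet A φ R T}.Finite ∧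
      (Nat.card {x : Fin (d+1) → ℤ | (fun i => (x i : ℝ)) ∈ PiSet A φ R T} : ℝ) ≤
        2 ^ d * (2 * (‖ω‖ * R * (C + 1) / γ) * (T / ψ (R * T)) + 2) ^ k *
          (2 * (‖ν‖ * (C + 1) / γ) + 2) ^ l := by
  set ε := γ * ψ (R * T) / (C + 1) with hε_def
  have hε : 0 < ε := by positivity
  have hCε : C * ε < γ * ψ (R * T) := calc
    C * ε < (C + 1) * ε := by linarith
    _ = γ * ψ (R * T) := by rw [hε_def]; field_simp
  let cast (x : Fin (d+1) → ℤ) : Fin (d+1) → ℝ := fun i => (x i : ℝ)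
  let f (x : Fin (d+1) → ℤ) : Fin k ⊕ Fin l → ℝ := Sum.elim (ω (cast x)) (ν (cast x))
  let M : Fin k ⊕ Fin l → ℝ := Sum.elim (fun _ => ‖ω‖ * (R * T)) (fun _ => ‖ν‖ * ψ (R * T))
  have hM : ∀ i, 0 ≤ M i := by
    rintro (i | j)
    · exact mul_nonneg (norm_nonneg _) (by nlinarith)
    · exact mul_nonneg (norm_nonneg _) hψpos.le
  have hbdd : ∀ x ∈ {x | cast x ∈ PiSet A φ R T}, ∀ i, |f x i| ≤ M i := by
    rintro x hx (i | j)
    · calc |ω (cast x) i| ≤ ‖ω (cast x)‖ := norm_le_pi_norm (ω (cast x)) i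
        _ ≤ ‖ω‖ * ‖cast x‖ := ω.le_opNorm _
        _ ≤ ‖ω‖ * (R * T) := by gcongr; exact norm_le_of_mem_PiSet hR hx
    · calc |ν (cast x) j| ≤ ‖ν (cast x)‖ := norm_le_pi_norm (ν (cast x)) j
        _ ≤ ‖ν‖ * infDist (cast x) (spanLift A) := ν.norm_apply_le_mul_infDist hν _
        _ ≤ ‖ν‖ * ψ (R * T) := by gcongr; exact hx.2.2.2.trans hφψ
  have hsep : ∀ x ∈ {x | cast x ∈ PiSet A φ R T}, ∀ y ∈ {x | cast x ∈ PiSet A φ R T},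
      (fun j : Fin d => decide (0 ≤ cast x j.succ)) = (fun j => decide (0 ≤ cast y j.succ)) →
      (∀ i, |f x i - f y i| < ε) → x = y := by
    intro x hx y hy hsign hclose
    refine eq_of_mem_PiSet_of_infDist_lt hR hγ.le hψanti hbad hx hy
      (fun j => decide_eq_decide.1 (congrFun hsign j)) ?_
    have hnorm : ‖(ω (cast x - cast y), ν (cast x - cast y))‖ < ε := by
      rw [Prod.norm_def, max_lt_iff, pi_norm_lt_iff hε, pi_norm_lt_iff hε]
      exact ⟨fun i => by simpa [f] using hclose (.inl i), fun j => by simpa [f] using hclose (.inr j)⟩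
    calc _ ≤ C * ‖(ω (cast x - cast y), ν (cast x - cast y))‖ := hdist _
      _ ≤ C * ε := by gcongr
      _ < γ * ψ (R * T) := hCε
  obtain ⟨hfin, hcard⟩ := finite_and_card_le_of_separated _ f hε hM hbdd hsep
  refine ⟨hfin, hcard.trans_eq ?_⟩
  have h1 : ‖ω‖ * (R * T) / ε = ‖ω‖ * R * (C + 1) / γ * (T / ψ (R * T)) := by
    rw [hε_def]; field_simp
  have h2 : ‖ν‖ * ψ (R * T) / ε = ‖ν‖ * (C + 1) / γ := by
    rw [hε_def]; field_simp
  simp [M, Fintype.prod_sum_type, h1, h2]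
  ring

end PiSet

theorem integer_points_in_pi_bound_general
    (d a b : ℕ) (R : ℝ) (hR : 1 ≤ R)
    (ψ φ : ℝ → ℝ)
    (hψpos : ∀ T, 1 ≤ T → 0 < ψ T)
    (hψanti : ∀ T₁ T₂, 1 ≤ T₁ → T₁ ≤ T₂ → ψ T₂ ≤ ψ T₁)
    (hφψ : ∀ T, 1 ≤ T → φ T ≤ ψ T)
    (A B : AffineSubspace ℝ (Fin d → ℝ)) (hBA : B ≤ A)
    (hBne : (B : Set (Fin d → ℝ)).Nonempty)
    (hb : Module.finrank ℝ B.direction = b)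
    (ha : Module.finrank ℝ A.direction = a)
    -- `B` is `ψ`-badly approximable:
    (hBbad : ∃ γ > (0:ℝ), ∀ x : Fin (d+1) → ℤ, x ≠ 0 →
      γ * ψ ‖(fun i => (x i : ℝ))‖ ≤
        Metric.infDist (fun i => (x i : ℝ)) (spanLift B : Set (Fin (d+1) → ℝ))) :
    ∃ C > (0:ℝ), ∀ T : ℝ, 1 ≤ T →
      {x : Fin (d+1) → ℤ | (fun i => (x i : ℝ)) ∈ PiSet A φ R T}.Finite ∧
      (Nat.card {x : Fin (d+1) → ℤ | (fun i => (x i : ℝ)) ∈ PiSet A φ R T} : ℝ)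
        ≤ C * (T / ψ (R * T)) ^ (a - b) := by
  obtain ⟨γ, hγ, hbad⟩ := hBbad
  obtain ⟨k, l, ω, ν, C₁, hk, hC₁, hν, hdist⟩ := exists_infDist_le_mul_norm_prod (spanLift_mono hBA)
  rw [finrank_spanLift hBne, finrank_spanLift (hBne.mono hBA), ha, hb] at hk
  obtain rfl : k = a - b := by omega
  set c₁ := 2 * (‖ω‖ * R * (C₁ + 1) / γ)
  have hc₁ : 0 ≤ c₁ := by positivity
  have hψ1 := hψpos 1 le_rfl
  refine ⟨2 ^ d * (c₁ + 2 * ψ 1) ^ (a - b) * (2 * (‖ν‖ * (C₁ + 1) / γ) + 2) ^ l, by positivity,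
    fun T hT => ?_⟩
  have hRT : 1 ≤ R * T := one_le_mul_of_one_le_of_one_le hR hT
  obtain ⟨hfin, hcard⟩ := finite_and_card_intPoints_PiSet_le hR (by linarith) hγ hC₁
    (hψpos _ hRT) hψanti (hφψ _ hRT) hbad ω ν hν hdist
  refine ⟨hfin, hcard.trans ?_⟩
  have hu : 2 ≤ 2 * ψ 1 * (T / ψ (R * T)) := by
    rw [mul_div_assoc', le_div_iff₀ (hψpos _ hRT)]
    nlinarith [hψanti 1 _ le_rfl hRT, hψpos _ hRT]
  have hu0 : 0 ≤ T / ψ (R * T) := div_nonneg (by linarith) (hψpos _ hRT).le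
  calc _ ≤ 2 ^ d * ((c₁ + 2 * ψ 1) * (T / ψ (R * T))) ^ (a - b) *
        (2 * (‖ν‖ * (C₁ + 1) / γ) + 2) ^ l := by
          gcongr
          linarith
    _ = _ := by rw [mul_pow]; ring

theorem integer_points_in_pi_bound
    (d a b : ℕ) (hd : 1 ≤ d) (R : ℝ) (hR : 1 ≤ R)
    (ψ φ : ℝ → ℝ)
    (hψpos : ∀ T, 1 ≤ T → 0 < ψ T) (hφpos : ∀ T, 1 ≤ T → 0 < φ T)
    (hψanti : ∀ T₁ T₂, 1 ≤ T₁ → T₁ ≤ T₂ → ψ T₂ ≤ ψ T₁)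
    (hφanti : ∀ T₁ T₂, 1 ≤ T₁ → T₁ ≤ T₂ → φ T₂ ≤ φ T₁)
    (hφψ : ∀ T, 1 ≤ T → φ T ≤ ψ T)
    (hψ0 : Filter.Tendsto ψ Filter.atTop (nhds 0))
    (A B : AffineSubspace ℝ (Fin d → ℝ)) (hBA : B ≤ A)
    (hBne : (B : Set (Fin d → ℝ)).Nonempty)
    (hb : Module.finrank ℝ B.direction = b)
    (ha : Module.finrank ℝ A.direction = a)
    (hba : b < a) (had : a ≤ d)
    -- `B` is `ψ`-badly approximable:
    (hBbad : ∃ γ > (0:ℝ), ∀ x : Fin (d+1) → ℤ, x ≠ 0 →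
      γ * ψ ‖(fun i => (x i : ℝ))‖ ≤
        Metric.infDist (fun i => (x i : ℝ)) (spanLift B : Set (Fin (d+1) → ℝ))) :
    ∃ C > (0:ℝ), ∀ T : ℝ, 1 ≤ T →
      {x : Fin (d+1) → ℤ | (fun i => (x i : ℝ)) ∈ PiSet A φ R T}.Finite ∧
      (Nat.card {x : Fin (d+1) → ℤ | (fun i => (x i : ℝ)) ∈ PiSet A φ R T} : ℝ)
        ≤ C * (T / ψ (R * T)) ^ (a - b) :=
  integer_points_in_pi_bound_general d a b R hR ψ φ hψpos hψanti hφψ A B hBA hBne hb ha hBbad
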